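/- For every real α ≥ 2 and every real x > 0, the function f(x) = ((x+2)^α − x^α)/(x+1)^{α−1} is decreasing; in particular ((n+2)^α − n^α)/(n+1)^{α−1} ≥ ((n+3)^α − (n+1)^α)/(n+2)^{α−1} for all integers n ≥ 1. -/

import Mathlib

/-!
With `y = x + 1`, the sign of `f'(x)` is that of
`α y ((y + 1)^(α-1) - (y - 1)^(α-1)) - (α - 1) ((y + 1)^α - (y - 1)^α)`.
Replace the half-width `1` by a variable `d ∈ [0, y]`: the expression vanishes at `d = 0`, and its
derivative in `d` is `-α (α - 1) d ((y + d)^(α-2) - (y - d)^(α-2)) ≤ 0` since `α ≥ 2`.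
-/

open Set

lemma mul_rpow_sub_rpow_le_mul_rpow_sub_rpow {α y d : ℝ} (hα : 2 ≤ α) (hd : 0 ≤ d)
    (hdy : d ≤ y) :
    α * y * ((y + d) ^ (α - 1) - (y - d) ^ (α - 1)) ≤
      (α - 1) * ((y + d) ^ α - (y - d) ^ α) := by
  set K : ℝ → ℝ := fun d =>
    (α - 1) * ((y + d) ^ α - (y - d) ^ α) - α * y * ((y + d) ^ (α - 1) - (y - d) ^ (α - 1))
  set K' : ℝ → ℝ := fun d =>
    α * (α - 1) * ((y + d) ^ (α - 1) + (y - d) ^ (α - 1))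
      - α * (α - 1) * y * ((y + d) ^ (α - 2) + (y - d) ^ (α - 2))
  have hK : ∀ t, HasDerivAt K (K' t) t := by
    intro t
    have hp : ∀ {p : ℝ}, 1 ≤ p →
        HasDerivAt (fun t => (y + t) ^ p) (p * (y + t) ^ (p - 1)) t :=
      fun hp => by simpa using ((hasDerivAt_id t).const_add y).rpow_const (Or.inr hp)
    have hm : ∀ {p : ℝ}, 1 ≤ p →
        HasDerivAt (fun t => (y - t) ^ p) (-(p * (y - t) ^ (p - 1))) t :=
      fun hp => by simpa using ((hasDerivAt_id t).const_sub y).rpow_const (Or.inr hp)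
    have hα1 : 1 ≤ α - 1 := by linarith
    refine ((((hp (by linarith)).sub (hm (by linarith))).const_mul (α - 1)).sub
      (((hp hα1).sub (hm hα1)).const_mul (α * y))).congr_deriv ?_
    rw [show α - 1 - 1 = α - 2 by ring]
    ring
  have hK'_nonneg : ∀ t ∈ Ioo 0 y, 0 ≤ K' t := by
    rintro t ⟨ht, hty⟩
    have hsplit : ∀ {s : ℝ}, 0 < s → s ^ (α - 1) = s ^ (α - 2) * s := fun hs => by
      rw [← Real.rpow_add_one hs.ne']; ring_nf
    have hmono : (y - t) ^ (α - 2) ≤ (y + t) ^ (α - 2) :=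
      Real.rpow_le_rpow (by linarith) (by linarith) (by linarith)
    have hK't : K' t = α * (α - 1) * t * ((y + t) ^ (α - 2) - (y - t) ^ (α - 2)) := by
      simp only [K', hsplit (by linarith : 0 < y + t), hsplit (by linarith : 0 < y - t)]
      ring
    have hα1 : 0 ≤ α - 1 := by linarith
    rw [hK't]
    exact mul_nonneg (by positivity) (sub_nonneg.2 hmono)
  have hKmono : MonotoneOn K (Icc 0 y) :=
    monotoneOn_of_hasDerivWithinAt_nonneg (convex_Icc 0 y)
      (fun t _ => (hK t).continuousAt.continuousWithinAt)
      (fun t _ => (hK t).hasDerivWithinAt) (by simpa using hK'_nonneg)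
  have hK0 := hKmono ⟨le_rfl, hd.trans hdy⟩ ⟨hd, hdy⟩ hd
  simp only [K, add_zero, sub_zero, sub_self, mul_zero] at hK0
  linarith

theorem antitoneOn_rpow_sub_rpow_div_rpow {α : ℝ} (hα : 2 ≤ α) :
    AntitoneOn (fun x : ℝ => ((x + 2) ^ α - x ^ α) / (x + 1) ^ (α - 1)) (Ici 0) := by
  set f' : ℝ → ℝ := fun x =>
    (α * ((x + 2) ^ (α - 1) - x ^ (α - 1)) * (x + 1) ^ (α - 1)
      - ((x + 2) ^ α - x ^ α) * ((α - 1) * (x + 1) ^ (α - 2))) / ((x + 1) ^ (α - 1)) ^ 2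
  have hf : ∀ x, 0 ≤ x →
      HasDerivAt (fun x : ℝ => ((x + 2) ^ α - x ^ α) / (x + 1) ^ (α - 1)) (f' x) x := by
    intro x hx
    have hp : ∀ (c : ℝ) {p : ℝ}, 1 ≤ p →
        HasDerivAt (fun x => (x + c) ^ p) (p * (x + c) ^ (p - 1)) x :=
      fun c p hp => by simpa using ((hasDerivAt_id x).add_const c).rpow_const (Or.inr hp)
    refine (((hp 2 (by linarith : 1 ≤ α)).sub
      (Real.hasDerivAt_rpow_const (Or.inr (by linarith : 1 ≤ α)))).div
      (hp 1 (by linarith : 1 ≤ α - 1)) (by positivity)).congr_deriv ?_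
    simp only [f', Pi.sub_apply, show α - 1 - 1 = α - 2 by ring]
    ring
  refine antitoneOn_of_hasDerivWithinAt_nonpos (convex_Ici 0)
    (fun x hx => (hf x hx).continuousAt.continuousWithinAt)
    (fun x hx => (hf x (interior_subset hx)).hasDerivWithinAt) ?_
  rw [interior_Ici]
  intro x (hx : 0 < x)
  have hkey := mul_rpow_sub_rpow_le_mul_rpow_sub_rpow (y := x + 1) hα zero_le_one (by linarith)
  rw [show x + 1 + 1 = x + 2 by ring, add_sub_cancel_right] at hkey
  have hsplit : (x + 1) ^ (α - 1) = (x + 1) ^ (α - 2) * (x + 1) := by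
    rw [← Real.rpow_add_one (by positivity)]; ring_nf
  refine div_nonpos_of_nonpos_of_nonneg ?_ (by positivity)
  rw [hsplit]
  nlinarith [mul_le_mul_of_nonneg_left hkey (by positivity : 0 ≤ (x + 1) ^ (α - 2))]

theorem f_decreasing (α : ℝ) (hα : 2 ≤ α) :
    (AntitoneOn (fun x : ℝ => ((x + 2) ^ α - x ^ α) / (x + 1) ^ (α - 1)) (Set.Ioi 0)) ∧
    (∀ n : ℕ, 1 ≤ n →
      (((n : ℝ) + 2) ^ α - (n : ℝ) ^ α) / ((n : ℝ) + 1) ^ (α - 1) ≥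
        (((n : ℝ) + 3) ^ α - ((n : ℝ) + 1) ^ α) / ((n : ℝ) + 2) ^ (α - 1)) := by
  have h := antitoneOn_rpow_sub_rpow_div_rpow hα
  refine ⟨h.mono Ioi_subset_Ici_self, fun n _ => ?_⟩
  have hn : (0 : ℝ) ≤ n := n.cast_nonneg
  have hstep := h (mem_Ici.2 hn) (mem_Ici.2 (by linarith)) (le_add_of_nonneg_right zero_le_one)
  dsimp only at hstep
  rwa [add_assoc, add_assoc, one_add_one_eq_two, show (1 : ℝ) + 2 = 3 by norm_num] at hstep
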